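/- Shamir's (ℓ+1, N)-threshold secret sharing has perfect ℓ-privacy: for any set I ⊆ {1,…,N} with |I| = ℓ and any two secrets s₀, s₁ ∈ F, the distribution of the tuple of shares (P(e_i))_{i∈I} with P(X) = s + ∑_{j=1}^{ℓ} r_j X^j and (r_1,…,r_ℓ) uniform in F^ℓ, is the same (uniform on F^ℓ) for s = s₀ and s = s₁. -/

import Mathlib

/-!
Up to the constant term, the shares are the values at the nodes `e i` of the polynomial
`X * ∑ j, r_j X^j`. Since the nodes are nonzero and distinct, the Vandermonde matrix shows that
`r ↦ (∑ j, r_j e_i ^ (j + 1))_{i ∈ I}` is injective, hence bijective from `F^ℓ` onto `F^I`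
when `|I| = ℓ`. So for any secret `s` each share vector is hit by exactly one `r`.
-/

open Function

theorem eq_zero_of_forall_sum_mul_pow_eq_zero {R ι : Type*} [CommRing R] [IsDomain R]
    [Fintype ι] {n : ℕ} {x : ι → R} (hx : Injective x) (hn : n ≤ Fintype.card ι)
    {c : Fin n → R} (h : ∀ i, ∑ j, c j * x i ^ (j : ℕ) = 0) : c = 0 := by
  obtain ⟨σ⟩ := Embedding.nonempty_of_card_le (by simpa using hn : Fintype.card (Fin n) ≤ _)
  exact Matrix.eq_zero_of_forall_index_sum_mul_pow_eq_zero (hx.comp σ.injective) fun k => h (σ k)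

theorem injective_sum_mul_pow_succ {R ι : Type*} [CommRing R] [IsDomain R] [Fintype ι]
    {n : ℕ} {x : ι → R} (hx : Injective x) (hx0 : ∀ i, x i ≠ 0) (hn : n ≤ Fintype.card ι) :
    Injective fun (c : Fin n → R) i => ∑ j, c j * x i ^ ((j : ℕ) + 1) := by
  intro c c' h
  rw [← sub_eq_zero]
  refine eq_zero_of_forall_sum_mul_pow_eq_zero hx hn fun i => ?_
  have hi : x i * ∑ j, (c - c') j * x i ^ (j : ℕ) = 0 := by
    simp only [Finset.mul_sum, Pi.sub_apply, pow_succ, ← sub_eq_zero.mpr (congrFun h i),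
      ← Finset.sum_sub_distrib]
    exact Finset.sum_congr rfl fun j _ => by ring
  exact (mul_eq_zero.mp hi).resolve_left (hx0 i)

theorem Fintype.card_fiber_eq_one_of_bijective {α β : Type*} [Fintype α] [Fintype β]
    [DecidableEq β] {f : α → β} (hf : Bijective f) (b : β) :
    Fintype.card {a // f a = b} = 1 :=
  (Fintype.card_congr (Equiv.subtypeEquiv (Equiv.ofBijective f hf) fun _ => Iff.rfl)).trans
    (Fintype.card_subtype_eq b)

open Polynomial in
theorem shamir_privacy_general (F : Type) [Field F] [Fintype F] [DecidableEq F]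
    (N ℓ : ℕ)
    (e : Fin N → F) (he : Function.Injective e) (he0 : ∀ i, e i ≠ 0)
    (s₀ s₁ : F) (I : Finset (Fin N)) (hI : I.card = ℓ) (t : Fin N → F) :
    Fintype.card {rc : Fin ℓ → F // ∀ i ∈ I,
        (C s₀ + ∑ j : Fin ℓ, C (rc j) * X ^ ((j : ℕ) + 1)).eval (e i) = t i}
      = Fintype.card {rc : Fin ℓ → F // ∀ i ∈ I,
        (C s₁ + ∑ j : Fin ℓ, C (rc j) * X ^ ((j : ℕ) + 1)).eval (e i) = t i} ∧
    Fintype.card {rc : Fin ℓ → F // ∀ i ∈ I,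
        (C s₀ + ∑ j : Fin ℓ, C (rc j) * X ^ ((j : ℕ) + 1)).eval (e i) = t i}
      = 1 := by
  have hcard : ℓ = Fintype.card I := by simp [hI]
  have hshares : Bijective fun (rc : Fin ℓ → F) (i : I) => ∑ j, rc j * e i ^ ((j : ℕ) + 1) :=
    (Fintype.bijective_iff_injective_and_card _).mpr
      ⟨injective_sum_mul_pow_succ (he.comp Subtype.val_injective) (fun i => he0 i) hcard.le,
        by simp [hcard]⟩
  have hunique : ∀ s, Fintype.card {rc : Fin ℓ → F // ∀ i ∈ I,
      (C s + ∑ j : Fin ℓ, C (rc j) * X ^ ((j : ℕ) + 1)).eval (e i) = t i} = 1 := fun s =>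
    (Fintype.card_congr (Equiv.subtypeEquivRight fun rc => by
      simp [eval_finsetSum, funext_iff, eq_sub_iff_add_eq'])).trans
      (Fintype.card_fiber_eq_one_of_bijective hshares fun i => t i - s)
  exact ⟨(hunique s₀).trans (hunique s₁).symm, hunique s₀⟩

open Polynomial in
/-- Perfect `ℓ`-privacy of Shamir's secret sharing: for any set `I` of `ℓ` parties and any
target tuple of shares, the number of randomness vectors producing exactly those shares is
the same for two secrets `s₀, s₁` (and equals `1`, so the shares are uniform on `F^ℓ`). -/
theorem shamir_privacy (F : Type) [Field F] [Fintype F] [DecidableEq F]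
    (N ℓ : ℕ) (hℓ : ℓ < N)
    (e : Fin N → F) (he : Function.Injective e) (he0 : ∀ i, e i ≠ 0)
    (s₀ s₁ : F) (I : Finset (Fin N)) (hI : I.card = ℓ) (t : Fin N → F) :
    Fintype.card {rc : Fin ℓ → F // ∀ i ∈ I,
        (C s₀ + ∑ j : Fin ℓ, C (rc j) * X ^ ((j : ℕ) + 1)).eval (e i) = t i}
      = Fintype.card {rc : Fin ℓ → F // ∀ i ∈ I,
        (C s₁ + ∑ j : Fin ℓ, C (rc j) * X ^ ((j : ℕ) + 1)).eval (e i) = t i} ∧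
    Fintype.card {rc : Fin ℓ → F // ∀ i ∈ I,
        (C s₀ + ∑ j : Fin ℓ, C (rc j) * X ^ ((j : ℕ) + 1)).eval (e i) = t i}
      = 1 :=
  shamir_privacy_general F N ℓ e he he0 s₀ s₁ I hI t
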